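/- Let A ⊆ E be a measurable set which is shift invariant (x ∈ A if and only if Bx ∈ A) and homogeneous (x ∈ A implies tx ∈ A for all t > 0). Then ν(A) ∈ {0, ∞}, and the following statements are equivalent: (i) ν(A) = 0; (ii) P(Y ∈ A) = 0; (iii) P(Θ ∈ A) = 0. -/

import Mathlib

/-!
Homogeneity of `ν` and of `A` gives `ν (A ∩ {c < ‖y 0‖}) = c ^ (-α) * ν (A ∩ {1 < ‖y 0‖})` for
every `c > 0`. If `ν (A ∩ {1 < ‖y 0‖}) > 0`, letting `c → 0` forces `ν A = ∞`. If it vanishes,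
then `ν (A ∩ {y 0 ≠ 0}) = 0`; shift invariance of `ν` and `A` moves this to every coordinate `j`,
and as `ν {0} = 0` we get `ν A = 0`. Finally `P (Y ∈ A) = ν (A ∩ {1 < ‖y 0‖})`, and since
`Θ` is a positive multiple of `Y` (`‖Y 0‖ > 1` almost surely) and `A` is a cone, `Y ∈ A` and
`Θ ∈ A` agree almost surely.
-/

open MeasureTheory ProbabilityTheory Set Filter
open scoped ENNReal NNReal Topology

noncomputable section

/-- The iterated backshift operator: `(B^k x) j = x (j - k)`. -/
def backshift {V : Type*} (k : ℤ) (x : ℤ → V) : ℤ → V := fun j => x (j - k)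

section Backshift

variable {V : Type*}

@[simp]
lemma backshift_zero : backshift (V := V) 0 = id := by
  funext x j; simp [backshift]

lemma backshift_add (k l : ℤ) : backshift (V := V) (k + l) = backshift k ∘ backshift l := by
  funext x j; simp [backshift, sub_sub]

lemma measurable_backshift [MeasurableSpace V] (k : ℤ) : Measurable (backshift (V := V) k) :=
  measurable_pi_lambda _ fun _ => measurable_pi_apply _

theorem backshift_induction (p : ((ℤ → V) → ℤ → V) → Prop) (h_id : p id)
    (h_comp : ∀ f g, p f → p g → p (f ∘ g)) (h_one : p (backshift 1))
    (h_neg_one : p (backshift (-1))) (k : ℤ) : p (backshift k) := by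
  induction k using Int.induction_on with
  | zero => rwa [backshift_zero]
  | succ i ih => rw [backshift_add]; exact h_comp _ _ ih h_one
  | pred i ih => rw [sub_eq_add_neg, backshift_add]; exact h_comp _ _ ih h_neg_one

lemma measurePreserving_backshift [MeasurableSpace V] {ν : Measure (ℤ → V)}
    (hν : ν.map (backshift 1) = ν) (k : ℤ) : MeasurePreserving (backshift k) ν ν := by
  have h_one : MeasurePreserving (backshift 1) ν ν := ⟨measurable_backshift 1, hν⟩
  have h_neg_one : MeasurePreserving (backshift (-1)) ν ν := by
    refine ⟨measurable_backshift _, ?_⟩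
    conv_lhs => rw [← hν]
    rw [Measure.map_map (measurable_backshift _) (measurable_backshift _), ← backshift_add,
      neg_add_cancel, backshift_zero, Measure.map_id]
  exact backshift_induction (MeasurePreserving · ν ν) (MeasurePreserving.id ν)
    (fun _ _ hf hg => hf.comp hg) h_one h_neg_one k

lemma preimage_backshift_eq {A : Set (ℤ → V)} (hA : ∀ x, x ∈ A ↔ backshift 1 x ∈ A) (k : ℤ) :
    backshift k ⁻¹' A = A := by
  refine backshift_induction (fun f => f ⁻¹' A = A) rfl
    (fun f g hf hg => by rw [preimage_comp, hf, hg]) (ext fun x => (hA x).symm) ?_ k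
  ext x
  rw [mem_preimage, hA, ← Function.comp_apply (f := backshift 1), ← backshift_add,
    add_neg_cancel, backshift_zero, id]

end Backshift

open scoped Pointwise

lemma smul_set_eq_self_of_cone {E : Type*} [MulAction ℝ E] {A : Set E}
    (hA : ∀ x ∈ A, ∀ t : ℝ, 0 < t → t • x ∈ A) {c : ℝ} (hc : 0 < c) : c • A = A := by
  refine Subset.antisymm ?_ fun x hx => ?_
  · rintro _ ⟨y, hy, rfl⟩
    exact hA y hy c hc
  · exact ⟨c⁻¹ • x, hA x hx _ (inv_pos.2 hc), smul_inv_smul₀ hc.ne' x⟩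

lemma smul_mem_iff_of_cone {E : Type*} [MulAction ℝ E] {A : Set E}
    (hA : ∀ x ∈ A, ∀ t : ℝ, 0 < t → t • x ∈ A) {c : ℝ} (hc : 0 < c) {x : E} :
    c • x ∈ A ↔ x ∈ A := by
  rw [← smul_mem_smul_set_iff₀ hc.ne' A x, smul_set_eq_self_of_cone hA hc]

lemma smul_setOf_one_lt_norm_apply {ι V : Type*} [NormedAddCommGroup V] [NormedSpace ℝ V]
    (i : ι) {c : ℝ} (hc : 0 < c) :
    c • {y : ι → V | 1 < ‖y i‖} = {y | c < ‖y i‖} := by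
  ext y
  rw [← preimage_smul_inv₀ hc.ne', mem_preimage, mem_ofPred_eq, mem_ofPred_eq, Pi.smul_apply,
    norm_smul, Real.norm_of_nonneg (inv_nonneg.2 hc.le), one_lt_inv_mul₀ hc]

lemma measure_eq_zero_of_forall_inter_apply_ne_zero {ι V : Type*} [Countable ι] [Zero V]
    [MeasurableSpace (ι → V)] {ν : Measure (ι → V)} {A : Set (ι → V)} (hν0 : ν {0} = 0)
    (hA : ∀ j, ν (A ∩ {y | y j ≠ 0}) = 0) : ν A = 0 := by
  refine measure_mono_null (fun x hx => ?_) (measure_union_null hν0 (measure_iUnion_null hA))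
  by_cases hx0 : x = 0
  · exact Or.inl hx0
  · obtain ⟨j, hj⟩ := Function.ne_iff.1 hx0
    exact Or.inr (mem_iUnion.2 ⟨j, hx, hj⟩)

lemma measure_inter_apply_ne_zero_eq_zero {ι V : Type*} [NormedAddCommGroup V]
    [MeasurableSpace (ι → V)] {ν : Measure (ι → V)} {A : Set (ι → V)} (i : ι)
    (hA : ∀ c : ℝ, 0 < c → ν (A ∩ {y | c < ‖y i‖}) = 0) : ν (A ∩ {y | y i ≠ 0}) = 0 := by
  refine measure_mono_null (fun x ⟨hxA, hx0⟩ => ?_)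
    (measure_iUnion_null fun n : ℕ => hA ((n : ℝ) + 1)⁻¹ (by positivity))
  obtain ⟨n, hn⟩ := exists_nat_one_div_lt (norm_pos_iff.2 hx0)
  exact mem_iUnion.2 ⟨n, hxA, by rwa [one_div] at hn⟩

lemma measurableSet_lt_norm_apply {ι V : Type*} [NormedAddCommGroup V] [MeasurableSpace V]
    [OpensMeasurableSpace V] (i : ι) (c : ℝ) : MeasurableSet {y : ι → V | c < ‖y i‖} :=
  measurableSet_lt measurable_const (measurable_pi_apply i).norm

section TailMeasure

variable {V : Type*} [NormedAddCommGroup V] [NormedSpace ℝ V] [MeasurableSpace V] [BorelSpace V]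
  {ν : Measure (ℤ → V)} {α : ℝ} {A : Set (ℤ → V)}

lemma measure_inter_lt_norm_apply_zero
    (hνhom : ∀ A : Set (ℤ → V), MeasurableSet A → ∀ c : ℝ, 0 < c →
      ν ((fun x => c • x) '' A) = ENNReal.ofReal (c ^ (-α)) * ν A)
    (hAmeas : MeasurableSet A) (hAhom : ∀ x ∈ A, ∀ t : ℝ, 0 < t → t • x ∈ A)
    {c : ℝ} (hc : 0 < c) :
    ν (A ∩ {y | c < ‖y 0‖}) = ENNReal.ofReal (c ^ (-α)) * ν (A ∩ {y | 1 < ‖y 0‖}) := by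
  have hscale : (fun x => c • x) '' (A ∩ {y | 1 < ‖y 0‖}) = A ∩ {y | c < ‖y 0‖} := by
    rw [image_smul, smul_set_inter₀ hc.ne', smul_set_eq_self_of_cone hAhom hc,
      smul_setOf_one_lt_norm_apply 0 hc]
  rw [← hscale, hνhom _ (hAmeas.inter (measurableSet_lt_norm_apply 0 1)) c hc]

lemma measure_eq_zero_of_measure_inter_one_lt_norm_eq_zero (hν0 : ν {0} = 0)
    (hνshift : ν.map (backshift 1) = ν)
    (hνhom : ∀ A : Set (ℤ → V), MeasurableSet A → ∀ c : ℝ, 0 < c →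
      ν ((fun x => c • x) '' A) = ENNReal.ofReal (c ^ (-α)) * ν A)
    (hAmeas : MeasurableSet A) (hAshift : ∀ x, x ∈ A ↔ backshift 1 x ∈ A)
    (hAhom : ∀ x ∈ A, ∀ t : ℝ, 0 < t → t • x ∈ A) (h : ν (A ∩ {y | 1 < ‖y 0‖}) = 0) :
    ν A = 0 := by
  have h_zero : ν (A ∩ {y | y 0 ≠ 0}) = 0 := measure_inter_apply_ne_zero_eq_zero 0 fun c hc => by
    rw [measure_inter_lt_norm_apply_zero hνhom hAmeas hAhom hc, h, mul_zero]
  refine measure_eq_zero_of_forall_inter_apply_ne_zero hν0 fun j => ?_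
  have hpre : backshift (-j) ⁻¹' (A ∩ {y | y 0 ≠ 0}) = A ∩ {y | y j ≠ 0} := by
    ext y
    simp [preimage_backshift_eq hAshift, backshift]
  have hmeas : MeasurableSet (A ∩ {y | y 0 ≠ 0}) :=
    hAmeas.inter ((measurableSet_singleton 0).preimage (measurable_pi_apply 0)).compl
  rw [← hpre, (measurePreserving_backshift hνshift (-j)).measure_preimage hmeas.nullMeasurableSet,
    h_zero]

lemma measure_eq_top_of_measure_inter_one_lt_norm_ne_zero (hα : 0 < α)
    (hνhom : ∀ A : Set (ℤ → V), MeasurableSet A → ∀ c : ℝ, 0 < c →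
      ν ((fun x => c • x) '' A) = ENNReal.ofReal (c ^ (-α)) * ν A)
    (hAmeas : MeasurableSet A) (hAhom : ∀ x ∈ A, ∀ t : ℝ, 0 < t → t • x ∈ A)
    (h : ν (A ∩ {y | 1 < ‖y 0‖}) ≠ 0) : ν A = ∞ := by
  have h_tendsto : Tendsto (fun t : ℝ => ENNReal.ofReal (t ^ α) * ν (A ∩ {y | 1 < ‖y 0‖}))
      atTop (𝓝 ∞) := by
    rw [← ENNReal.top_mul h]
    exact ENNReal.Tendsto.mul_const (ENNReal.tendsto_ofReal_atTop.comp (tendsto_rpow_atTop hα))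
      (Or.inl ENNReal.top_ne_zero)
  refine top_le_iff.1 (le_of_tendsto h_tendsto ((eventually_gt_atTop 0).mono fun t ht => ?_))
  calc ENNReal.ofReal (t ^ α) * ν (A ∩ {y | 1 < ‖y 0‖})
      = ν (A ∩ {y | t⁻¹ < ‖y 0‖}) := by
        rw [measure_inter_lt_norm_apply_zero hνhom hAmeas hAhom (inv_pos.2 ht),
          Real.inv_rpow ht.le, Real.rpow_neg ht.le, inv_inv]
    _ ≤ ν A := measure_mono inter_subset_left

end TailMeasure

lemma ae_mem_of_map_eq_restrict {Ω β : Type*} [MeasurableSpace Ω] [MeasurableSpace β]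
    {P : Measure Ω} {ν : Measure β} {Y : Ω → β} {S : Set β} (hY : AEMeasurable Y P)
    (hS : MeasurableSet S) (hlaw : P.map Y = ν.restrict S) : ∀ᵐ ω ∂P, Y ω ∈ S :=
  ae_of_ae_map hY (hlaw ▸ ae_restrict_mem hS)

theorem statement2_general
    -- `V` plays the role of `ℝ^d` (`d ≥ 1`) equipped with an arbitrary norm
    {V : Type*} [NormedAddCommGroup V] [NormedSpace ℝ V]
    [MeasurableSpace V] [BorelSpace V]
    (α : ℝ) (hα : 0 < α)
    -- the tail measure and its properties
    (ν : Measure (ℤ → V))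
    (hν0 : ν {0} = 0)
    (hνshift : ν.map (backshift 1) = ν)
    (hνhom : ∀ A : Set (ℤ → V), MeasurableSet A → ∀ c : ℝ, 0 < c →
      ν ((fun x => c • x) '' A) = ENNReal.ofReal (c ^ (-α)) * ν A)
    -- the tail process `Y` and the spectral tail process `Θ`
    {Ω : Type*} [MeasurableSpace Ω] (P : Measure Ω)
    (Y : Ω → ℤ → V) (hYmeas : Measurable Y)
    (hYlaw : P.map Y = ν.restrict {y : ℤ → V | 1 < ‖y 0‖})
    (Θ : Ω → ℤ → V) (hΘdef : ∀ ω, Θ ω = ‖Y ω 0‖⁻¹ • Y ω)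
    -- the statement
    (A : Set (ℤ → V)) (hAmeas : MeasurableSet A)
    (hAshift : ∀ x, x ∈ A ↔ backshift 1 x ∈ A)
    (hAhom : ∀ x ∈ A, ∀ t : ℝ, 0 < t → t • x ∈ A) :
    (ν A = 0 ∨ ν A = ∞) ∧
      (ν A = 0 ↔ P (Y ⁻¹' A) = 0) ∧
      (P (Y ⁻¹' A) = 0 ↔ P (Θ ⁻¹' A) = 0) := by
  have hYA : P (Y ⁻¹' A) = ν (A ∩ {y | 1 < ‖y 0‖}) := by
    rw [← Measure.map_apply hYmeas hAmeas, hYlaw, Measure.restrict_apply hAmeas]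
  have hΘA : P (Y ⁻¹' A) = P (Θ ⁻¹' A) := by
    refine measure_congr (eventuallyEq_set.2 ?_)
    filter_upwards [ae_mem_of_map_eq_restrict hYmeas.aemeasurable
      (measurableSet_lt_norm_apply 0 1) hYlaw] with ω hω
    rw [mem_preimage, mem_preimage, hΘdef,
      smul_mem_iff_of_cone hAhom (inv_pos.2 (one_pos.trans hω))]
  have h_zero := measure_eq_zero_of_measure_inter_one_lt_norm_eq_zero hν0 hνshift hνhom hAmeas
    hAshift hAhom
  refine ⟨?_, ⟨fun h => ?_, fun h => h_zero (hYA ▸ h)⟩, by rw [hΘA]⟩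
  · by_cases h : ν (A ∩ {y | 1 < ‖y 0‖}) = 0
    · exact Or.inl (h_zero h)
    · exact Or.inr (measure_eq_top_of_measure_inter_one_lt_norm_ne_zero hα hνhom hAmeas hAhom h)
  · rw [hYA]
    exact measure_mono_null inter_subset_left h

/-- **Zero-infinity law for shift invariant homogeneous sets.**
If `A` is a measurable, shift invariant and homogeneous subset of `E`, then
`ν(A) ∈ {0, ∞}`, and `ν(A) = 0 ↔ P(Y ∈ A) = 0 ↔ P(Θ ∈ A) = 0`. -/
theorem statement2
    -- `V` plays the role of `ℝ^d` (`d ≥ 1`) equipped with an arbitrary norm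
    {V : Type*} [NormedAddCommGroup V] [NormedSpace ℝ V] [FiniteDimensional ℝ V]
    [Nontrivial V] [MeasurableSpace V] [BorelSpace V]
    (α : ℝ) (hα : 0 < α)
    -- the tail measure and its properties
    (ν : Measure (ℤ → V))
    (hν0 : ν {0} = 0)
    (hν1 : ν {y : ℤ → V | 1 < ‖y 0‖} = 1)
    (hνshift : ν.map (backshift 1) = ν)
    (hνhom : ∀ A : Set (ℤ → V), MeasurableSet A → ∀ c : ℝ, 0 < c →
      ν ((fun x => c • x) '' A) = ENNReal.ofReal (c ^ (-α)) * ν A)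
    -- the tail process `Y` and the spectral tail process `Θ`
    {Ω : Type*} [MeasurableSpace Ω] (P : Measure Ω) [IsProbabilityMeasure P]
    (Y : Ω → ℤ → V) (hYmeas : Measurable Y)
    (hYlaw : P.map Y = ν.restrict {y : ℤ → V | 1 < ‖y 0‖})
    (Θ : Ω → ℤ → V) (hΘdef : ∀ ω, Θ ω = ‖Y ω 0‖⁻¹ • Y ω)
    (hPareto : ∀ u : ℝ, 1 ≤ u → P {ω | u < ‖Y ω 0‖} = ENNReal.ofReal (u ^ (-α)))
    (hindep : IndepFun (fun ω => ‖Y ω 0‖) Θ P)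
    (hpolar : ∀ H : (ℤ → V) → ℝ≥0∞, Measurable H →
      ∫⁻ y in {y : ℤ → V | y 0 ≠ 0}, H y ∂ν
        = ∫⁻ r in Ioi (0 : ℝ),
            (∫⁻ ω, H (r • Θ ω) ∂P) * ENNReal.ofReal (α * r ^ (-α - 1)))
    -- the statement
    (A : Set (ℤ → V)) (hAmeas : MeasurableSet A)
    (hAshift : ∀ x, x ∈ A ↔ backshift 1 x ∈ A)
    (hAhom : ∀ x ∈ A, ∀ t : ℝ, 0 < t → t • x ∈ A) :
    (ν A = 0 ∨ ν A = ∞) ∧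
      (ν A = 0 ↔ P (Y ⁻¹' A) = 0) ∧
      (P (Y ⁻¹' A) = 0 ↔ P (Θ ⁻¹' A) = 0) :=
  statement2_general α hα ν hν0 hνshift hνhom P Y hYmeas hYlaw Θ hΘdef A hAmeas hAshift hAhom
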